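/- arXiv:1704.04398 — 3 statements merged into one kernel-verified Lean document; each statement's English description precedes it below -/
import Mathlib

section
/- Let x∼y be an edge of G. Then the idleness function p ↦ κ_p(x,y) is concave on the interval [0,1]; that is, for all p,q ∈ [0,1] and t ∈ [0,1], κ_{t·p+(1−t)·q}(x,y) ≥ t·κ_p(x,y) + (1−t)·κ_q(x,y). -/
open scoped Classical

noncomputable def mu {V : Type*} (G : SimpleGraph V) [G.LocallyFinite] (x : V) (p : ℝ) :
    V → ℝ :=
  fun z => if z = x then p else if G.Adj x z then (1 - p) / (G.degree x) else 0

def IsPlan {V : Type*} (π : V × V → ℝ) (μ1 μ2 : V → ℝ) : Prop :=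
  (∀ q, π q ∈ Set.Icc (0 : ℝ) 1) ∧ (Function.support π).Finite ∧
    (∀ u, ∑ᶠ v, π (u, v) = μ1 u) ∧ (∀ v, ∑ᶠ u, π (u, v) = μ2 v)

noncomputable def cost {V : Type*} (G : SimpleGraph V) (π : V × V → ℝ) : ℝ :=
  ∑ᶠ q : V × V, (G.dist q.1 q.2 : ℝ) * π q

noncomputable def W1 {V : Type*} (G : SimpleGraph V) (μ1 μ2 : V → ℝ) : ℝ :=
  sInf (cost G '' {π | IsPlan π μ1 μ2})

noncomputable def kappa {V : Type*} (G : SimpleGraph V) [G.LocallyFinite]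
    (p : ℝ) (x y : V) : ℝ :=
  1 - W1 G (mu G x p) (mu G y p)

def IsLip {V : Type*} (G : SimpleGraph V) (φ : V → ℝ) : Prop :=
  ∀ u v, |φ u - φ v| ≤ (G.dist u v : ℝ)

noncomputable def Fpot {V : Type*} (G : SimpleGraph V) [G.LocallyFinite]
    (x y : V) (φ : V → ℝ) : ℝ :=
  (G.degree y : ℝ) * ∑ z ∈ (G.neighborFinset x).erase y, φ z
    - (G.degree x : ℝ) * ∑ z ∈ (G.neighborFinset y).erase x, φ z

noncomputable def cIdle {V : Type*} (G : SimpleGraph V) [G.LocallyFinite]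
    (x y : V) (j : ℤ) : ℝ :=
  sSup (Fpot G x y ''
    {φ | IsLip G φ ∧ (∀ w, ∃ n : ℤ, φ w = (n : ℝ)) ∧ φ x = (j : ℝ) ∧ φ y = 0})

noncomputable def fIdle {V : Type*} (G : SimpleGraph V) [G.LocallyFinite]
    (x y : V) (j : ℤ) (p : ℝ) : ℝ :=
  (p - (1 - p) / (G.degree y : ℝ)) * (j : ℝ)
    + ((1 - p) / ((G.degree x : ℝ) * (G.degree y : ℝ))) * cIdle G x y j

def IsFinProb {V : Type*} (μ : V → ℝ) : Prop :=
  (∀ v, 0 ≤ μ v) ∧ (Function.support μ).Finite ∧ ∑ᶠ v, μ v = 1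


/-!
A convex combination of transport plans is a transport plan between the corresponding convex
combinations of the marginals, and its cost is the same convex combination of the costs. Hence
`W1` is jointly convex in its two arguments. Since `p ↦ μ_x^p` is affine, `p ↦ W1(μ_x^p, μ_y^p)`
is convex, and `κ_p(x, y) = 1 - W1(μ_x^p, μ_y^p)` is concave.
-/

open Function

theorem finsum_convexComb {α : Type*} {f g : α → ℝ} (hf : (support f).Finite)
    (hg : (support g).Finite) (t : ℝ) :
    ∑ᶠ a, (t * f a + (1 - t) * g a) = t * ∑ᶠ a, f a + (1 - t) * ∑ᶠ a, g a := by
  rw [mul_finsum, mul_finsum]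
  exact finsum_add_distrib (hf.subset (support_mul_subset_right _ _))
    (hg.subset (support_mul_subset_right _ _))

theorem IsFinProb.le_one {V : Type*} {μ : V → ℝ} (h : IsFinProb μ) (v : V) : μ v ≤ 1 :=
  h.2.2 ▸ single_le_finsum v h.2.1 h.1

theorem IsFinProb.isPlan_prod {V : Type*} {μ ν : V → ℝ} (hμ : IsFinProb μ) (hν : IsFinProb ν) :
    IsPlan (fun q : V × V => μ q.1 * ν q.2) μ ν := by
  refine ⟨fun q => ⟨mul_nonneg (hμ.1 _) (hν.1 _), mul_le_one₀ (hμ.le_one _) (hν.1 _)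
    (hν.le_one _)⟩, ?_, fun u => ?_, fun v => ?_⟩
  · refine (hμ.2.1.prod hν.2.1).subset fun q hq => ?_
    exact ⟨left_ne_zero_of_mul hq, right_ne_zero_of_mul hq⟩
  · simp only [← mul_finsum, hν.2.2, mul_one]
  · simp only [← finsum_mul, hμ.2.2, one_mul]

namespace IsPlan

variable {V : Type*} {π π₁ π₂ : V × V → ℝ} {μ ν μ₁ ν₁ μ₂ ν₂ : V → ℝ}

theorem cost_nonneg (G : SimpleGraph V) (h : IsPlan π μ ν) : 0 ≤ cost G π :=
  finsum_nonneg fun q => mul_nonneg (Nat.cast_nonneg _) (h.1 q).1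

theorem convexComb {t : ℝ} (ht : t ∈ Set.Icc (0 : ℝ) 1) (h₁ : IsPlan π₁ μ₁ ν₁)
    (h₂ : IsPlan π₂ μ₂ ν₂) :
    IsPlan (fun q => t * π₁ q + (1 - t) * π₂ q)
      (fun v => t * μ₁ v + (1 - t) * μ₂ v) (fun v => t * ν₁ v + (1 - t) * ν₂ v) := by
  obtain ⟨ht0, ht1⟩ := ht
  obtain ⟨hb₁, hs₁, hr₁, hc₁⟩ := h₁
  obtain ⟨hb₂, hs₂, hr₂, hc₂⟩ := h₂
  refine ⟨fun q => ?_, ?_, fun u => ?_, fun v => ?_⟩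
  · obtain ⟨h0₁, h1₁⟩ := hb₁ q
    obtain ⟨h0₂, h1₂⟩ := hb₂ q
    constructor <;> nlinarith
  · refine (hs₁.union hs₂).subset fun q hq => ?_
    by_contra h
    simp_all
  · rw [finsum_convexComb (hs₁.preimage (Prod.mk_right_injective u).injOn)
      (hs₂.preimage (Prod.mk_right_injective u).injOn), hr₁, hr₂]
  · rw [finsum_convexComb (hs₁.preimage (Prod.mk_left_injective v).injOn)
      (hs₂.preimage (Prod.mk_left_injective v).injOn), hc₁, hc₂]

end IsPlan

theorem cost_convexComb {V : Type*} (G : SimpleGraph V) {π₁ π₂ : V × V → ℝ}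
    (hs₁ : (support π₁).Finite) (hs₂ : (support π₂).Finite) (t : ℝ) :
    cost G (fun q => t * π₁ q + (1 - t) * π₂ q) = t * cost G π₁ + (1 - t) * cost G π₂ := by
  unfold cost
  simp only [mul_add, mul_left_comm _ t, mul_left_comm _ (1 - t)]
  exact finsum_convexComb (hs₁.subset (support_mul_subset_right _ _))
    (hs₂.subset (support_mul_subset_right _ _)) t

theorem W1_convexComb_le {V : Type*} (G : SimpleGraph V) {μ₁ ν₁ μ₂ ν₂ : V → ℝ} {t : ℝ}
    (ht : t ∈ Set.Icc (0 : ℝ) 1) (h₁ : ∃ π, IsPlan π μ₁ ν₁) (h₂ : ∃ π, IsPlan π μ₂ ν₂) :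
    W1 G (fun v => t * μ₁ v + (1 - t) * μ₂ v) (fun v => t * ν₁ v + (1 - t) * ν₂ v)
      ≤ t * W1 G μ₁ ν₁ + (1 - t) * W1 G μ₂ ν₂ := by
  have bdd : ∀ μ ν : V → ℝ, BddBelow (cost G '' {π | IsPlan π μ ν}) :=
    fun μ ν => ⟨0, by rintro _ ⟨π, hπ, rfl⟩; exact hπ.cost_nonneg G⟩
  have ne : ∀ {μ ν : V → ℝ}, (∃ π, IsPlan π μ ν) → (cost G '' {π | IsPlan π μ ν}).Nonempty :=
    fun ⟨π, hπ⟩ => ⟨_, π, hπ, rfl⟩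
  have ht' : 0 ≤ 1 - t := sub_nonneg.2 ht.2
  unfold W1
  -- `t • inf S₁ + (1 - t) • inf S₂ = inf (t • S₁ + (1 - t) • S₂)`, and each element of the
  -- right-hand set is the cost of a plan between the combined marginals.
  rw [← smul_eq_mul, ← smul_eq_mul (a := 1 - t), ← Real.sInf_smul_of_nonneg ht.1,
    ← Real.sInf_smul_of_nonneg ht',
    ← csInf_add (ne h₁).smul_set ((bdd _ _).smul_of_nonneg ht.1) (ne h₂).smul_set
      ((bdd _ _).smul_of_nonneg ht')]
  refine le_csInf ((ne h₁).smul_set.add (ne h₂).smul_set) ?_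
  rintro _ ⟨_, ⟨_, ⟨π₁, hπ₁, rfl⟩, rfl⟩, _, ⟨_, ⟨π₂, hπ₂, rfl⟩, rfl⟩, rfl⟩
  refine csInf_le (bdd _ _) ⟨_, hπ₁.convexComb ht hπ₂, ?_⟩
  exact cost_convexComb G hπ₁.2.1 hπ₂.2.1 t

section mu

variable {V : Type*} (G : SimpleGraph V) [G.LocallyFinite]

theorem support_mu_subset (x : V) (p : ℝ) :
    support (mu G x p) ⊆ ↑(insert x (G.neighborFinset x)) := by
  intro z hz
  simp only [mem_support, mu] at hz
  split_ifs at hz with h1 h2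
  · simp [h1]
  · simp [h2]
  · exact absurd rfl hz

theorem isFinProb_mu {x : V} {p : ℝ} (hp : p ∈ Set.Icc (0 : ℝ) 1) (hx : 0 < G.degree x) :
    IsFinProb (mu G x p) := by
  have hd : (1 : ℝ) ≤ G.degree x := by exact_mod_cast hx
  refine ⟨fun z => ?_, (Finset.finite_toSet _).subset (support_mu_subset G x p), ?_⟩
  · unfold mu
    split_ifs
    · exact hp.1
    · exact div_nonneg (sub_nonneg.2 hp.2) (by positivity)
    · exact le_rfl
  · have hnbr : ∀ z ∈ G.neighborFinset x, mu G x p z = (1 - p) / G.degree x := fun z hz => by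
      have hz : G.Adj x z := (G.mem_neighborFinset x z).1 hz
      simp [mu, hz, hz.ne']
    rw [finsum_eq_sum_of_support_subset _ (support_mu_subset G x p),
      Finset.sum_insert (by simp), Finset.sum_congr rfl hnbr, Finset.sum_const,
      G.card_neighborFinset_eq_degree, nsmul_eq_mul]
    have hmx : mu G x p x = p := if_pos rfl
    rw [hmx]
    field_simp
    ring

theorem mu_convexComb (x : V) (p q t : ℝ) :
    mu G x (t * p + (1 - t) * q) = fun z => t * mu G x p z + (1 - t) * mu G x q z := by
  funext z
  unfold mu
  split_ifs
  · rfl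
  · ring
  · ring

end mu

theorem stmt0_general {V : Type*} (G : SimpleGraph V) [G.LocallyFinite]
    (x y : V) (hxy : G.Adj x y) :
    ∀ p ∈ Set.Icc (0 : ℝ) 1, ∀ q ∈ Set.Icc (0 : ℝ) 1, ∀ t ∈ Set.Icc (0 : ℝ) 1,
      t * kappa G p x y + (1 - t) * kappa G q x y ≤ kappa G (t * p + (1 - t) * q) x y := by
  intro p hp q hq t ht
  have hplan : ∀ s ∈ Set.Icc (0 : ℝ) 1, ∃ π, IsPlan π (mu G x s) (mu G y s) := fun s hs =>
    ⟨_, (isFinProb_mu G hs ((G.degree_pos_iff_exists_adj x).2 ⟨y, hxy⟩)).isPlan_prod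
      (isFinProb_mu G hs ((G.degree_pos_iff_exists_adj y).2 ⟨x, hxy.symm⟩))⟩
  have hW1 := W1_convexComb_le G ht (hplan p hp) (hplan q hq)
  rw [← mu_convexComb, ← mu_convexComb] at hW1
  unfold kappa
  linarith

theorem stmt0 {V : Type*} (G : SimpleGraph V) [G.LocallyFinite] (hG : G.Connected)
    (x y : V) (hxy : G.Adj x y) :
    ∀ p ∈ Set.Icc (0 : ℝ) 1, ∀ q ∈ Set.Icc (0 : ℝ) 1, ∀ t ∈ Set.Icc (0 : ℝ) 1,
      t * kappa G p x y + (1 - t) * kappa G q x y ≤ kappa G (t * p + (1 - t) * q) x y :=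
  stmt0_general G x y hxy
end

section
/- Let x∼y be an edge of G. Then the supremum of F(φ) over all 1-Lipschitz functions φ : V → ℤ with φ(x) = φ(y) = 0 equals the supremum of F(φ) over all 1-Lipschitz functions φ : V → (1/2)·ℤ (half-integer valued) with φ(x) = φ(y) = 0. -/
open scoped Classical

/-! A half-integer valued 1-Lipschitz `φ` is the average of `⌈φ⌉` and `⌊φ⌋`. Rounding is monotone
and commutes with integer shifts, so both are integer valued, 1-Lipschitz and still vanish at `x`
and `y`; as `F` is linear, `F φ` is the average of two values of the integer family. The reverse
inequality is inclusion, and both suprema are finite since `|φ| ≤ 1` on the neighbours of `x`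
and `y`. -/

lemma Int.ceil_add_floor_intCast_div_two (n : ℤ) : ⌈(n : ℝ) / 2⌉ + ⌊(n : ℝ) / 2⌋ = n := by
  have h : (n : ℝ) / 2 = ((n / (2 : ℕ) : ℚ) : ℝ) := by push_cast; rfl
  rw [h, Rat.ceil_cast, Rat.floor_cast, Rat.ceil_intCast_div_natCast,
    Rat.floor_intCast_div_natCast]
  omega

namespace IsLip

variable {V : Type*} {G : SimpleGraph V} {φ : V → ℝ}

lemma le_add_dist (hφ : IsLip G φ) (u v : V) : φ u ≤ φ v + G.dist u v := by
  linarith [(abs_le.1 (hφ u v)).2]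

lemma intCast_comp {r : ℝ → ℤ} (hmono : Monotone r) (hshift : ∀ t (n : ℤ), r (t + n) = r t + n)
    (hφ : IsLip G φ) : IsLip G (fun w => (r (φ w) : ℝ)) := by
  have key : ∀ u v, r (φ u) ≤ r (φ v) + G.dist u v := fun u v => by
    have := hshift (φ v) (G.dist u v)
    push_cast at this
    exact this ▸ hmono (hφ.le_add_dist u v)
  intro u v
  have h₁ := key u v
  have h₂ := key v u
  rw [SimpleGraph.dist_comm] at h₂
  show |(r (φ u) : ℝ) - r (φ v)| ≤ G.dist u v
  rw [abs_sub_le_iff]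
  constructor <;> norm_cast <;> omega

lemma ceil (hφ : IsLip G φ) : IsLip G (fun w => (⌈φ w⌉ : ℝ)) :=
  hφ.intCast_comp Int.ceil_mono Int.ceil_add_intCast

lemma floor (hφ : IsLip G φ) : IsLip G (fun w => (⌊φ w⌋ : ℝ)) :=
  hφ.intCast_comp Int.floor_mono Int.floor_add_intCast

lemma abs_le_one_of_adj (hφ : IsLip G φ) {a z : V} (ha : φ a = 0) (haz : G.Adj a z) :
    |φ z| ≤ 1 := by
  simpa [ha, SimpleGraph.dist_eq_one_iff_adj.2 haz.symm] using hφ z a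

lemma abs_sum_neighborFinset_erase_le [G.LocallyFinite] (hφ : IsLip G φ) {a : V}
    (ha : φ a = 0) (b : V) :
    |∑ z ∈ (G.neighborFinset a).erase b, φ z| ≤ G.degree a :=
  calc |∑ z ∈ (G.neighborFinset a).erase b, φ z|
      ≤ ∑ z ∈ (G.neighborFinset a).erase b, (1 : ℝ) := by
        refine (Finset.abs_sum_le_sum_abs _ _).trans (Finset.sum_le_sum fun z hz => ?_)
        exact hφ.abs_le_one_of_adj ha (by simpa using Finset.mem_of_mem_erase hz)
    _ ≤ G.degree a := by
        rw [Finset.sum_const, nsmul_one, ← G.card_neighborFinset_eq_degree]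
        exact_mod_cast Finset.card_erase_le

end IsLip

section Fpot

variable {V : Type*} (G : SimpleGraph V) [G.LocallyFinite] (x y : V)

lemma Fpot_le_of_isLip {φ : V → ℝ} (hφ : IsLip G φ) (hx : φ x = 0) (hy : φ y = 0) :
    Fpot G x y φ ≤ 2 * G.degree x * G.degree y := by
  have hsx := abs_le.1 (hφ.abs_sum_neighborFinset_erase_le hx y)
  have hsy := abs_le.1 (hφ.abs_sum_neighborFinset_erase_le hy x)
  have hdx : (0 : ℝ) ≤ G.degree x := by positivity
  have hdy : (0 : ℝ) ≤ G.degree y := by positivity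
  unfold Fpot
  nlinarith [mul_le_mul_of_nonneg_left hsx.2 hdy, mul_le_mul_of_nonneg_left hsy.1 hdx]

lemma Fpot_mul_add_mul (a b : ℝ) (f g : V → ℝ) :
    Fpot G x y (fun w => a * f w + b * g w) = a * Fpot G x y f + b * Fpot G x y g := by
  simp only [Fpot, Finset.sum_add_distrib, ← Finset.mul_sum]
  ring

end Fpot

theorem stmt13_general {V : Type*} (G : SimpleGraph V) [G.LocallyFinite] (x y : V) :
    sSup (Fpot G x y ''
        {φ : V → ℝ | IsLip G φ ∧ (∀ w, ∃ n : ℤ, φ w = (n : ℝ)) ∧ φ x = 0 ∧ φ y = 0}) =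
      sSup (Fpot G x y ''
        {φ : V → ℝ | IsLip G φ ∧ (∀ w, ∃ n : ℤ, φ w = (n : ℝ) / 2) ∧ φ x = 0 ∧ φ y = 0}) := by
  set A := {φ : V → ℝ | IsLip G φ ∧ (∀ w, ∃ n : ℤ, φ w = (n : ℝ)) ∧ φ x = 0 ∧ φ y = 0}
  set B := {φ : V → ℝ | IsLip G φ ∧ (∀ w, ∃ n : ℤ, φ w = (n : ℝ) / 2) ∧ φ x = 0 ∧ φ y = 0}
  have hAB : A ⊆ B := fun φ ⟨hlip, hint, hx, hy⟩ =>
    ⟨hlip, fun w => let ⟨n, hn⟩ := hint w; ⟨2 * n, by rw [hn]; push_cast; ring⟩, hx, hy⟩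
  have hzero : (fun _ => 0) ∈ A := ⟨fun u v => by simp, fun _ => ⟨0, by simp⟩, rfl, rfl⟩
  have hbddB : BddAbove (Fpot G x y '' B) := ⟨2 * G.degree x * G.degree y, by
    rintro _ ⟨φ, ⟨hlip, -, hx, hy⟩, rfl⟩
    exact Fpot_le_of_isLip G x y hlip hx hy⟩
  have hbddA := hbddB.mono (Set.image_mono hAB)
  refine le_antisymm (csSup_le_csSup hbddB ⟨_, Set.mem_image_of_mem _ hzero⟩ (Set.image_mono hAB))
    (csSup_le ⟨_, Set.mem_image_of_mem _ (hAB hzero)⟩ ?_)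
  rintro _ ⟨φ, ⟨hlip, hhalf, hx, hy⟩, rfl⟩
  have hceil : (fun w => (⌈φ w⌉ : ℝ)) ∈ A :=
    ⟨hlip.ceil, fun w => ⟨_, rfl⟩, by simp [hx], by simp [hy]⟩
  have hfloor : (fun w => (⌊φ w⌋ : ℝ)) ∈ A :=
    ⟨hlip.floor, fun w => ⟨_, rfl⟩, by simp [hx], by simp [hy]⟩
  have hmid : φ = fun w => 1 / 2 * (⌈φ w⌉ : ℝ) + 1 / 2 * (⌊φ w⌋ : ℝ) := funext fun w => by
    obtain ⟨n, hn⟩ := hhalf w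
    have := congrArg (Int.cast : ℤ → ℝ) (Int.ceil_add_floor_intCast_div_two n)
    push_cast at this
    rw [hn]
    linarith
  rw [hmid, Fpot_mul_add_mul]
  linarith [le_csSup hbddA (Set.mem_image_of_mem _ hceil),
    le_csSup hbddA (Set.mem_image_of_mem _ hfloor)]

theorem stmt13 {V : Type*} (G : SimpleGraph V) [G.LocallyFinite] (hG : G.Connected)
    (x y : V) (hxy : G.Adj x y) :
    sSup (Fpot G x y ''
        {φ : V → ℝ | IsLip G φ ∧ (∀ w, ∃ n : ℤ, φ w = (n : ℝ)) ∧ φ x = 0 ∧ φ y = 0}) =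
      sSup (Fpot G x y ''
        {φ : V → ℝ | IsLip G φ ∧ (∀ w, ∃ n : ℤ, φ w = (n : ℝ) / 2) ∧ φ x = 0 ∧ φ y = 0}) :=
  stmt13_general G x y
end

section
/- Let x∼y be an edge of G. Then c_1 ≥ c_0 ≥ c_{−1}. -/
open scoped Classical

/-!
For `φ` admissible with `φ x = j`, `φ y = 0` and `j ∈ {-1, 0}`, raise it to
`max φ (j + 1 - d(x, ·))`, which is admissible with value `j + 1` at `x`. The increment `g ≥ 0`
vanishes on `N(y) \ {x}` except at common neighbours of `x` and `y`, and only when `j = 0`; hence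
`∑_{N(y)} g ≤ ∑_{N(x)} g` and `F` does not decrease if `j = -1` or `d_x ≤ d_y`. The remaining case
`j = 0`, `d_y ≤ d_x` reduces to this one through the reflection `φ ↦ j - φ`, which exchanges the
roles of `x` and `y` and shifts `F` by `j (d_y - d_x)`.
-/

section

variable {V : Type*} {G : SimpleGraph V}

namespace IsLip

lemma le_add_one_of_adj {φ : V → ℝ} (hφ : IsLip G φ) {u v : V} (h : G.Adj u v) :
    φ v ≤ φ u + 1 := by
  have := (abs_le.mp (hφ v u)).2
  rw [SimpleGraph.dist_eq_one_iff_adj.mpr h.symm] at this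
  push_cast at this
  linarith

lemma const_sub {φ : V → ℝ} (hφ : IsLip G φ) (c : ℝ) : IsLip G fun z => c - φ z := by
  intro u v
  rw [show c - φ u - (c - φ v) = φ v - φ u by ring, SimpleGraph.dist_comm]
  exact hφ v u

lemma const_mul {φ : V → ℝ} (hφ : IsLip G φ) {c : ℝ} (hc : |c| ≤ 1) :
    IsLip G fun z => c * φ z := by
  intro u v
  rw [← mul_sub, abs_mul]
  exact (mul_le_of_le_one_left (abs_nonneg _) hc).trans (hφ u v)

lemma max {φ ψ : V → ℝ} (hφ : IsLip G φ) (hψ : IsLip G ψ) :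
    IsLip G fun z => max (φ z) (ψ z) :=
  fun u v => (abs_max_sub_max_le_max _ _ _ _).trans (max_le (hφ u v) (hψ u v))

end IsLip

lemma SimpleGraph.Connected.isLip_dist (hG : G.Connected) (x : V) :
    IsLip G fun z => (G.dist x z : ℝ) := by
  intro u v
  have hu : (G.dist x u : ℝ) ≤ G.dist x v + G.dist v u := by exact_mod_cast hG.dist_triangle
  have hv : (G.dist x v : ℝ) ≤ G.dist x u + G.dist u v := by exact_mod_cast hG.dist_triangle
  rw [SimpleGraph.dist_comm (u := v)] at hu
  exact abs_sub_le_iff.mpr ⟨by linarith, by linarith⟩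

lemma SimpleGraph.card_erase_neighborFinset_add_one [G.LocallyFinite] {v w : V}
    (h : G.Adj v w) : (((G.neighborFinset v).erase w).card : ℝ) + 1 = G.degree v := by
  rw [← G.card_neighborFinset_eq_degree,
    ← Finset.card_erase_add_one ((G.mem_neighborFinset v w).mpr h)]
  push_cast
  rfl

lemma IsLip.sum_erase_neighborFinset_le [G.LocallyFinite] {φ : V → ℝ} (hφ : IsLip G φ)
    (v w : V) : ∑ z ∈ (G.neighborFinset v).erase w, φ z ≤ G.degree v * (|φ v| + 1) := by
  calc ∑ z ∈ (G.neighborFinset v).erase w, φ z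
      ≤ ∑ _z ∈ (G.neighborFinset v).erase w, (|φ v| + 1) := by
        refine Finset.sum_le_sum fun z hz => ?_
        have hvz : G.Adj v z := (G.mem_neighborFinset v z).mp (Finset.mem_of_mem_erase hz)
        linarith [hφ.le_add_one_of_adj hvz, le_abs_self (φ v)]
    _ = ((G.neighborFinset v).erase w).card * (|φ v| + 1) := by
        rw [Finset.sum_const, nsmul_eq_mul]
    _ ≤ G.degree v * (|φ v| + 1) := by
        gcongr
        rw [← G.card_neighborFinset_eq_degree]
        exact_mod_cast Finset.card_erase_le

variable (G) in
def idlePotentials (x y : V) (j : ℤ) : Set (V → ℝ) :=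
  {φ | IsLip G φ ∧ (∀ w, ∃ n : ℤ, φ w = (n : ℝ)) ∧ φ x = (j : ℝ) ∧ φ y = 0}

variable {x y : V}

lemma idlePotentials_nonempty (hG : G.Connected) (hxy : G.Adj x y) {j : ℤ} (hj : |(j : ℝ)| ≤ 1) :
    (idlePotentials G x y j).Nonempty :=
  ⟨fun z => (j : ℝ) * G.dist y z, (hG.isLip_dist y).const_mul hj,
    fun w => ⟨j * G.dist y w, by push_cast; rfl⟩,
    by simp [SimpleGraph.dist_eq_one_iff_adj.mpr hxy.symm], by simp⟩

lemma mem_idlePotentials_swap {φ : V → ℝ} {j : ℤ} (hφ : φ ∈ idlePotentials G x y j) :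
    (fun z => (j : ℝ) - φ z) ∈ idlePotentials G y x j := by
  obtain ⟨hlip, hint, hx, hy⟩ := hφ
  refine ⟨hlip.const_sub _, fun w => ?_, by simp [hy], by simp [hx]⟩
  obtain ⟨n, hn⟩ := hint w
  exact ⟨j - n, by push_cast [hn]; rfl⟩

variable [G.LocallyFinite]

lemma cIdle_eq_sSup (j : ℤ) :
    cIdle G x y j = sSup (Fpot G x y '' idlePotentials G x y j) :=
  rfl

lemma Fpot_sub (φ ψ : V → ℝ) :
    Fpot G x y (fun z => φ z - ψ z) = Fpot G x y φ - Fpot G x y ψ := by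
  simp only [Fpot, Finset.sum_sub_distrib]
  ring

lemma Fpot_swap_const_sub (hxy : G.Adj x y) (c : ℝ) (φ : V → ℝ) :
    Fpot G y x (fun z => c - φ z) = Fpot G x y φ + c * (G.degree y - G.degree x) := by
  have hx := G.card_erase_neighborFinset_add_one hxy
  have hy := G.card_erase_neighborFinset_add_one hxy.symm
  simp only [Fpot, Finset.sum_sub_distrib, Finset.sum_const, nsmul_eq_mul]
  linear_combination (c * G.degree x) * hy - (c * G.degree y) * hx

lemma Fpot_nonneg {g : V → ℝ} (hg : ∀ z, 0 ≤ g z)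
    (hsupp : ∀ z ∈ (G.neighborFinset y).erase x, g z ≠ 0 →
      z ∈ (G.neighborFinset x).erase y ∧ G.degree x ≤ G.degree y) :
    0 ≤ Fpot G x y g := by
  have hSx : 0 ≤ ∑ z ∈ (G.neighborFinset x).erase y, g z := Finset.sum_nonneg fun z _ => hg z
  unfold Fpot
  by_cases! hzero : ∀ z ∈ (G.neighborFinset y).erase x, g z = 0
  · rw [Finset.sum_eq_zero hzero, mul_zero, sub_zero]
    positivity
  obtain ⟨z, hz, hgz⟩ := hzero
  have hdeg : (G.degree x : ℝ) ≤ G.degree y := by exact_mod_cast (hsupp z hz hgz).2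
  have hsum : ∑ z ∈ (G.neighborFinset y).erase x, g z ≤
      ∑ z ∈ (G.neighborFinset x).erase y, g z := by
    rw [← Finset.sum_filter_ne_zero]
    refine Finset.sum_le_sum_of_subset_of_nonneg (fun z hz => ?_) fun z _ _ => hg z
    rw [Finset.mem_filter] at hz
    exact (hsupp z hz.1 hz.2).1
  have hSy : 0 ≤ ∑ z ∈ (G.neighborFinset y).erase x, g z := Finset.sum_nonneg fun z _ => hg z
  nlinarith

lemma bddAbove_Fpot_image_idlePotentials (j : ℤ) :
    BddAbove (Fpot G x y '' idlePotentials G x y j) := by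
  refine ⟨G.degree y * (G.degree x * (|(j : ℝ)| + 1)) + G.degree x * G.degree y, ?_⟩
  rintro _ ⟨φ, ⟨hφ, -, hx, hy⟩, rfl⟩
  have hSx := hφ.sum_erase_neighborFinset_le x y
  have hSy := (hφ.const_sub 0).sum_erase_neighborFinset_le y x
  simp only [hx, hy, zero_sub, Finset.sum_neg_distrib, neg_zero, abs_zero, zero_add,
    mul_one] at hSx hSy
  unfold Fpot
  have := mul_le_mul_of_nonneg_left hSx (Nat.cast_nonneg (α := ℝ) (G.degree y))
  have := mul_le_mul_of_nonneg_left hSy (Nat.cast_nonneg (α := ℝ) (G.degree x))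
  linarith

lemma cIdle_le_cIdle_of_forall_exists_Fpot_le {j k : ℤ} (hne : (idlePotentials G x y j).Nonempty)
    (h : ∀ φ ∈ idlePotentials G x y j, ∃ φ' ∈ idlePotentials G x y k,
      Fpot G x y φ ≤ Fpot G x y φ') :
    cIdle G x y j ≤ cIdle G x y k := by
  rw [cIdle_eq_sSup, cIdle_eq_sSup]
  refine csSup_le (hne.image _) ?_
  rintro _ ⟨φ, hφ, rfl⟩
  obtain ⟨φ', hφ', hle⟩ := h φ hφ
  exact hle.trans (le_csSup (bddAbove_Fpot_image_idlePotentials k) ⟨φ', hφ', rfl⟩)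

lemma exists_mem_idlePotentials_succ_Fpot_ge (hG : G.Connected) (hxy : G.Adj x y) {j : ℤ}
    (hj : j = -1 ∨ j = 0 ∧ G.degree x ≤ G.degree y) {φ : V → ℝ}
    (hφ : φ ∈ idlePotentials G x y j) :
    ∃ φ' ∈ idlePotentials G x y (j + 1), Fpot G x y φ ≤ Fpot G x y φ' := by
  obtain ⟨hlip, hint, hx, hy⟩ := hφ
  have hj0 : j ≤ 0 := by omega
  set ψ : V → ℝ := fun z => ((j : ℝ) + 1) - G.dist x z
  set φ' : V → ℝ := fun z => max (φ z) (ψ z)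
  have hmem : φ' ∈ idlePotentials G x y (j + 1) := by
    refine ⟨hlip.max ((hG.isLip_dist x).const_sub _), fun w => ?_, ?_, ?_⟩
    · obtain ⟨n, hn⟩ := hint w
      exact ⟨max n (j + 1 - G.dist x w), by simp [φ', ψ, hn]⟩
    · simp [φ', ψ, hx]
    · simp [φ', ψ, hy, SimpleGraph.dist_eq_one_iff_adj.mpr hxy]
      exact_mod_cast hj0
  refine ⟨φ', hmem, ?_⟩
  have hsupp : ∀ z ∈ (G.neighborFinset y).erase x, φ' z - φ z ≠ 0 →
      z ∈ (G.neighborFinset x).erase y ∧ G.degree x ≤ G.degree y := by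
    intro z hz hne
    obtain ⟨hzx, hyz⟩ := Finset.mem_erase.mp hz
    rw [SimpleGraph.mem_neighborFinset] at hyz
    have hlt : φ z < ψ z := by
      by_contra! h
      exact hne (by simp [φ', max_eq_left h])
    obtain ⟨n, hn⟩ := hint z
    have h1 : -1 ≤ n := by
      have := hlip.le_add_one_of_adj hyz.symm
      rw [hy, hn] at this
      exact_mod_cast (by linarith : (-1 : ℝ) ≤ n)
    have h2 : n < j + 1 - G.dist x z := by
      have : (n : ℝ) < j + 1 - G.dist x z := hn ▸ hlt
      exact_mod_cast this
    have h3 : G.dist x z ≠ 0 := fun h => hzx ((hG.dist_eq_zero_iff.mp h).symm)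
    have hd : G.dist x z = 1 := by omega
    refine ⟨Finset.mem_erase.mpr ⟨hyz.ne',
      (G.mem_neighborFinset x z).mpr (SimpleGraph.dist_eq_one_iff_adj.mp hd)⟩, ?_⟩
    rcases hj with hj | ⟨-, hdeg⟩
    · omega
    · exact hdeg
  have := Fpot_nonneg (fun z => sub_nonneg.mpr (le_max_left (φ z) (ψ z))) hsupp
  rw [Fpot_sub] at this
  linarith

lemma exists_mem_idlePotentials_one_Fpot_ge_of_degree_le (hG : G.Connected) (hxy : G.Adj x y)
    (hdeg : G.degree y ≤ G.degree x) {φ : V → ℝ} (hφ : φ ∈ idlePotentials G x y 0) :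
    ∃ φ' ∈ idlePotentials G x y 1, Fpot G x y φ ≤ Fpot G x y φ' := by
  obtain ⟨ψ, hψ, hle⟩ := exists_mem_idlePotentials_succ_Fpot_ge hG hxy.symm
    (Or.inr ⟨rfl, hdeg⟩) (mem_idlePotentials_swap hφ)
  refine ⟨_, mem_idlePotentials_swap hψ, ?_⟩
  have hφψ := Fpot_swap_const_sub hxy ((0 : ℤ) : ℝ) φ
  have hψφ := Fpot_swap_const_sub hxy.symm ((0 + 1 : ℤ) : ℝ) ψ
  have hdeg' : (G.degree y : ℝ) ≤ G.degree x := by exact_mod_cast hdeg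
  push_cast at hφψ hψφ hle ⊢
  linarith

end

theorem stmt14 {V : Type*} (G : SimpleGraph V) [G.LocallyFinite] (hG : G.Connected)
    (x y : V) (hxy : G.Adj x y) :
    cIdle G x y (-1) ≤ cIdle G x y 0 ∧ cIdle G x y 0 ≤ cIdle G x y 1 := by
  refine ⟨cIdle_le_cIdle_of_forall_exists_Fpot_le (idlePotentials_nonempty hG hxy (by norm_num))
    fun φ hφ => exists_mem_idlePotentials_succ_Fpot_ge hG hxy (Or.inl rfl) hφ, ?_⟩
  refine cIdle_le_cIdle_of_forall_exists_Fpot_le (idlePotentials_nonempty hG hxy (by norm_num))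
    fun φ hφ => ?_
  rcases le_total (G.degree x) (G.degree y) with hdeg | hdeg
  · exact exists_mem_idlePotentials_succ_Fpot_ge hG hxy (Or.inr ⟨rfl, hdeg⟩) hφ
  · exact exists_mem_idlePotentials_one_Fpot_ge_of_degree_le hG hxy hdeg hφ
end
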